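/- There is an absolute constant \gamma'' > 0 such that the following holds. Let G be a d-regular bipartite graph with parts X and Y, let w and t \ge 1 be integers, and let (S,T) \in 2^X \times 2^Y satisfy |S| \le |T|. Then the number of sets A \in \mathcal{G}(w,t) with [A] \subseteq S and T \subseteq N(A) is at most 2^{w - \gamma'' t}. -/

import Mathlib

/-! Every `A` in the family has `|N(A)| = w` and `|[A]| = w - t`. Let `Q` be the intersection
of the neighbourhoods `N(A)` and `U` the union of the closures `[A]`, so that
`|U| ≤ |S| ≤ |T| ≤ |Q|`, and put `r = w - |Q|`. If `10 r ≥ t`, every `A` is a subset of `U`,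
which leaves at most `2^|U| ≤ 2^(w - r)` choices. Otherwise `A` is determined, up to the
`2^(w - t)` subsets of `[A]`, by the `r`-set `N(A) \ Q`. This set is the union of the sets
`N(x) \ Q` (`x ∈ U`) it contains, and exactly `ρ = |U| - |[A]|` of them are not contained in
it. Such sets number at most `binom(ρ + r, r)` (induct on `r`, splitting by whether a fixed
point lies in the set), and `ρ + r ≤ t`, `10 r < t` give `binom(ρ + r, r) ≤ 2^(9t/10)`. -/

open scoped Classical

noncomputable section

variable {V : Type*}

/-- The square of a graph: vertices at distance 1 or 2 are adjacent. -/
def gsq (G : SimpleGraph V) : SimpleGraph V where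
  Adj u v := u ≠ v ∧ (G.Adj u v ∨ ∃ w, G.Adj u w ∧ G.Adj w v)
  symm := by
    refine ⟨?_⟩
    rintro u v ⟨h1, h2⟩
    refine ⟨h1.symm, ?_⟩
    rcases h2 with h | ⟨w, hw1, hw2⟩
    · exact Or.inl h.symm
    · exact Or.inr ⟨w, hw2.symm, hw1.symm⟩
  loopless := by refine ⟨?_⟩; rintro u ⟨h, -⟩; exact h rfl

/-- `A` is 2-linked: the subgraph of the square of `G` induced on `A` is connected. -/
def TwoLinked (G : SimpleGraph V) (A : Finset V) : Prop :=
  ((gsq G).induce (A : Set V)).Connected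

variable [Fintype V] [DecidableEq V]

/-- The neighborhood of a vertex, as a `Finset`. -/
def nbrF (G : SimpleGraph V) (v : V) : Finset V :=
  Finset.univ.filter (fun u => G.Adj v u)

/-- The neighborhood `N(A)` of a set of vertices. -/
def nbr (G : SimpleGraph V) (A : Finset V) : Finset V :=
  Finset.univ.filter (fun u => ∃ a ∈ A, G.Adj a u)

/-- The closure `[A] = {x ∈ X : N(x) ⊆ N(A)}` of `A` within the part `X`. -/
def cl (G : SimpleGraph V) (X A : Finset V) : Finset V :=
  X.filter (fun x => nbrF G x ⊆ nbr G A)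

/-- `A` is closed (within the part `X`) if `[A] = A`. -/
def IsClosedSet (G : SimpleGraph V) (X A : Finset V) : Prop :=
  cl G X A = A

/-- The 2-linked components of `A`: equivalence classes of the reachability
relation in the square of `G` restricted to `A`. -/
def comps (G : SimpleGraph V) (A : Finset V) : Finset (Finset V) :=
  A.image (fun a =>
    A.filter (fun b => Relation.ReflTransGen
      (fun u v => (gsq G).Adj u v ∧ u ∈ A ∧ v ∈ A) a b))

/-- The number of independent sets of `G` (including the empty set). -/
def numInd (G : SimpleGraph V) : ℕ :=
  (Finset.univ.filter (fun s : Finset V => ∀ u ∈ s, ∀ v ∈ s, ¬ G.Adj u v)).card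

/-- `A ⊆ X` is `t`-contracting if `|N(A)| < |[A]| + t`. -/
def Contracting (G : SimpleGraph V) (X : Finset V) (t : ℤ) (A : Finset V) : Prop :=
  ((nbr G A).card : ℤ) < ((cl G X A).card : ℤ) + t

/-- `D_A`: product over the 2-linked components `A'` of `A` of the number of
2-linked `B ⊆ A'` with `N(B) = N(A')`. -/
def DA (G : SimpleGraph V) (A : Finset V) : ℕ :=
  ∏ A' ∈ comps G A,
    (A'.powerset.filter (fun B => TwoLinked G B ∧ nbr G B = nbr G A')).card

/-- The value `|∇(C)|` of the cut `C`: the number of edges with exactly one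
endpoint in `C`. -/
def cutVal (G : SimpleGraph V) (C : Finset V) : ℕ :=
  ∑ u ∈ C, (nbrF G u \ C).card

/-- `B` is a polymer of `P_A` (a nonempty 2-linked subset of `X_A = X \ N²(A)`)
that is not `t0`-contracting. -/
def IsPolymerIn (G : SimpleGraph V) (X : Finset V) (t0 : ℤ) (A B : Finset V) : Prop :=
  B.Nonempty ∧ TwoLinked G B ∧ B ⊆ X \ nbr G (nbr G A) ∧ ¬ Contracting G X t0 B

/-- `Ξ_A`: sum over unordered compatible collections of non-`t0`-contracting
polymers from `P_A` of `2^{-∑|N(B_i)|}`. -/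
def Xi (G : SimpleGraph V) (X : Finset V) (t0 : ℤ) (A : Finset V) : ℝ :=
  ∑ F ∈ Finset.univ.filter (fun F : Finset (Finset V) =>
      (∀ B ∈ F, IsPolymerIn G X t0 A B) ∧
      (∀ B ∈ F, ∀ B' ∈ F, B ≠ B' → Disjoint (nbr G B) (nbr G B'))),
    ∏ B ∈ F, ((2:ℝ) ^ (nbr G B).card)⁻¹

/-- `𝒢(w,t)`: polymers `B ⊆ X` with `|N(B)| = w` and `|N(B)| - |[B]| = t`. -/
def GG (G : SimpleGraph V) (X : Finset V) (w t : ℤ) : Finset (Finset V) :=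
  X.powerset.filter (fun B => B.Nonempty ∧ TwoLinked G B ∧
    ((nbr G B).card : ℤ) = w ∧ ((nbr G B).card : ℤ) - ((cl G X B).card : ℤ) = t)

/-- `G` is bipartite with parts `X` and `Y`. -/
def IsBipartiteWith (G : SimpleGraph V) (X Y : Finset V) : Prop :=
  Disjoint X Y ∧ X ∪ Y = Finset.univ ∧
    ∀ u v, G.Adj u v → (u ∈ X ∧ v ∈ Y) ∨ (u ∈ Y ∧ v ∈ X)

/-- `G` is `d`-regular. -/
def IsRegularDeg (G : SimpleGraph V) (d : ℕ) : Prop :=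
  ∀ v, (nbrF G v).card = d

/-- `d_S(v)`: number of neighbors of `v` in `S`. -/
def degIn (G : SimpleGraph V) (v : V) (S : Finset V) : ℕ := (nbrF G v ∩ S).card

/-- `W_{d/2}`: vertices of `N(A)` with at least `d/2` neighbors in `A`. -/
def Wbig (G : SimpleGraph V) (d : ℕ) (A : Finset V) : Finset V :=
  (nbr G A).filter (fun y => (d : ℝ) / 2 ≤ (degIn G y A : ℝ))

/-- `F` is an essential set for `A`: `N(A) ⊇ F ⊇ W_{d/2}` and `N(F) ⊇ [A]`. -/
def EssentialSet (G : SimpleGraph V) (X : Finset V) (d : ℕ) (A F : Finset V) : Prop :=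
  F ⊆ nbr G A ∧ Wbig G d A ⊆ F ∧ cl G X A ⊆ nbr G F

/-- `(S,T)` is a `γ'`-container for `A`, where `t = |N(A)| - |[A]|`. -/
def IsContainer (G : SimpleGraph V) (X Y : Finset V) (d : ℕ) (γ' : ℝ)
    (A S T : Finset V) : Prop :=
  cl G X A ⊆ S ∧ Wbig G d A ⊆ T ∧ T ⊆ nbr G A ∧
  (∀ v ∈ S, (degIn G v (Y \ T) : ℝ) ≤
      γ' * (((nbr G A).card : ℝ) - ((cl G X A).card : ℝ))) ∧
  (∀ v ∈ Y \ T, (degIn G v S : ℝ) ≤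
      γ' * (((nbr G A).card : ℝ) - ((cl G X A).card : ℝ)))

open Finset

section SpannedSets

variable {α β : Type*} [DecidableEq α]

def IsSpannedBy (𝒰 : Finset β) (φ : β → Finset α) (ρ : ℕ) (E : Finset α) : Prop :=
  #{x ∈ 𝒰 | ¬ φ x ⊆ E} = ρ ∧ ∀ p ∈ E, ∃ x ∈ 𝒰, p ∈ φ x ∧ φ x ⊆ E

theorem IsSpannedBy.erase {𝒰 : Finset β} {φ : β → Finset α} {ρ : ℕ} {E : Finset α}
    {p : α} (hE : IsSpannedBy 𝒰 φ ρ E) (hp : p ∈ E) :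
    IsSpannedBy 𝒰 (fun x => (φ x).erase p) ρ (E.erase p) := by
  have herase : ∀ s : Finset α, s.erase p ⊆ E.erase p ↔ s ⊆ E := fun s => by
    rw [subset_erase, erase_subset_iff_of_mem hp]
    simp
  refine ⟨by simpa only [herase] using hE.1, fun q hq => ?_⟩
  obtain ⟨x, hx, hqx, hxE⟩ := hE.2 q (mem_of_mem_erase hq)
  exact ⟨x, hx, mem_erase.2 ⟨ne_of_mem_erase hq, hqx⟩, erase_subset_erase p hxE⟩

theorem IsSpannedBy.filter_not_mem {𝒰 : Finset β} {φ : β → Finset α} {ρ : ℕ}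
    {E : Finset α} {p : α} (hE : IsSpannedBy 𝒰 φ ρ E) (hp : p ∉ E) :
    IsSpannedBy {x ∈ 𝒰 | p ∉ φ x} φ (ρ - #{x ∈ 𝒰 | p ∈ φ x}) E := by
  refine ⟨?_, fun q hq => ?_⟩
  · have hsplit := card_filter_add_card_filter_not
      (s := {x ∈ 𝒰 | ¬ φ x ⊆ E}) (p := fun x => p ∈ φ x)
    have hcontains : {x ∈ 𝒰 | ¬ φ x ⊆ E ∧ p ∈ φ x} = {x ∈ 𝒰 | p ∈ φ x} :=
      filter_congr fun x _ => ⟨And.right, fun hpx => ⟨fun hxE => hp (hxE hpx), hpx⟩⟩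
    rw [filter_filter, filter_filter, hE.1, hcontains] at hsplit
    rw [filter_filter, ← hsplit, Nat.add_sub_cancel_left]
    exact congrArg card (filter_congr fun x _ => and_comm)
  · obtain ⟨x, hx, hqx, hxE⟩ := hE.2 q hq
    exact ⟨x, mem_filter.2 ⟨hx, fun hpx => hp (hxE hpx)⟩, hqx, hxE⟩

theorem card_le_choose_of_isSpannedBy {𝒰 : Finset β} {φ : β → Finset α}
    {ℰ : Finset (Finset α)} {ρ r : ℕ} (h : ∀ E ∈ ℰ, #E = r ∧ IsSpannedBy 𝒰 φ ρ E) :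
    #ℰ ≤ (ρ + r).choose r := by
  induction r generalizing ρ 𝒰 φ ℰ with
  | zero =>
    have hℰ : ℰ ⊆ {∅} := fun E hE => mem_singleton.2 (card_eq_zero.1 (h E hE).1)
    simpa using card_le_card hℰ
  | succ r ihr =>
    induction ρ using Nat.strong_induction_on generalizing 𝒰 ℰ with
    | _ ρ ihρ =>
    obtain rfl | ⟨E₀, hE₀⟩ := ℰ.eq_empty_or_nonempty
    · simp
    obtain ⟨p, hp⟩ := card_pos.1 (by rw [(h E₀ hE₀).1]; exact r.succ_pos)
    obtain ⟨x₀, hx₀, hpx₀, -⟩ := (h E₀ hE₀).2.2 p hp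
    have hcontaining : #{E ∈ ℰ | p ∈ E} ≤ (ρ + r).choose r := by
      have herase : Set.InjOn (fun E : Finset α => E.erase p) ↑({E ∈ ℰ | p ∈ E}) :=
        fun E hE E' hE' hEE' => by
          rw [← insert_erase (mem_filter.1 hE).2, ← insert_erase (mem_filter.1 hE').2]
          exact congrArg (insert p) hEE'
      rw [← card_image_of_injOn herase]
      refine ihr (𝒰 := 𝒰) (φ := fun x => (φ x).erase p) fun E' hE' => ?_
      obtain ⟨E, hE, rfl⟩ := mem_image.1 hE'
      obtain ⟨hEℰ, hpE⟩ := mem_filter.1 hE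
      exact ⟨by rw [card_erase_of_mem hpE, (h E hEℰ).1]; rfl, (h E hEℰ).2.erase hpE⟩
    have havoiding : #{E ∈ ℰ | p ∉ E} ≤ (ρ + r).choose (r + 1) := by
      obtain h₂ | ⟨E₂, hE₂⟩ := ({E ∈ ℰ | p ∉ E} : Finset (Finset α)).eq_empty_or_nonempty
      · simp [h₂]
      set u := #{x ∈ 𝒰 | p ∈ φ x}
      have hu : 0 < u := card_pos.2 ⟨x₀, mem_filter.2 ⟨hx₀, hpx₀⟩⟩
      have huρ : u ≤ ρ := by
        obtain ⟨hE₂ℰ, hpE₂⟩ := mem_filter.1 hE₂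
        rw [← (h E₂ hE₂ℰ).2.1]
        exact card_le_card (monotone_filter_right _ fun _ _ hpx hxE => hpE₂ (hxE hpx))
      calc #{E ∈ ℰ | p ∉ E} ≤ (ρ - u + (r + 1)).choose (r + 1) :=
            ihρ (ρ - u) (by omega) fun E hE =>
              ⟨(h E (mem_filter.1 hE).1).1,
                (h E (mem_filter.1 hE).1).2.filter_not_mem (mem_filter.1 hE).2⟩
        _ ≤ (ρ + r).choose (r + 1) := Nat.choose_le_choose _ (by omega)
    calc #ℰ = #{E ∈ ℰ | p ∈ E} + #{E ∈ ℰ | p ∉ E} :=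
          (card_filter_add_card_filter_not _).symm
      _ ≤ (ρ + r).choose r + (ρ + r).choose (r + 1) := add_le_add hcontaining havoiding
      _ = (ρ + (r + 1)).choose (r + 1) := (Nat.choose_succ_succ _ _).symm

end SpannedSets

section Closure
variable {G : SimpleGraph V} {X A Q U : Finset V}

omit [DecidableEq V] in
@[simp] theorem mem_nbrF {x y : V} : y ∈ nbrF G x ↔ G.Adj x y := by simp [nbrF]

omit [DecidableEq V] in
@[simp] theorem mem_nbr {y : V} : y ∈ nbr G A ↔ ∃ a ∈ A, G.Adj a y := by simp [nbr]

theorem mem_cl {x : V} : x ∈ cl G X A ↔ x ∈ X ∧ nbrF G x ⊆ nbr G A := by simp [cl]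

theorem subset_cl (hA : A ⊆ X) : A ⊆ cl G X A := fun a ha =>
  mem_cl.2 ⟨hA ha, fun _ hy => mem_nbr.2 ⟨a, ha, mem_nbrF.1 hy⟩⟩

theorem cl_eq_of_nbr_eq {B : Finset V} (h : nbr G A = nbr G B) : cl G X A = cl G X B := by
  simp only [cl, h]

theorem nbrF_sdiff_subset_iff (hQ : Q ⊆ nbr G A) {x : V} (hx : x ∈ X) :
    nbrF G x \ Q ⊆ nbr G A \ Q ↔ x ∈ cl G X A := by
  rw [mem_cl, and_iff_right hx]
  show nbrF G x \ Q ≤ nbr G A \ Q ↔ _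
  rw [sdiff_le_iff, sup_eq_union, union_sdiff_of_subset hQ]

theorem isSpannedBy_nbr_sdiff (hA : A ⊆ X) (hQ : Q ⊆ nbr G A) (hclU : cl G X A ⊆ U)
    (hUX : U ⊆ X) :
    IsSpannedBy U (fun x => nbrF G x \ Q) (#U - #(cl G X A)) (nbr G A \ Q) := by
  have hspanning : {x ∈ U | nbrF G x \ Q ⊆ nbr G A \ Q} = cl G X A := by
    rw [filter_congr fun x hx => nbrF_sdiff_subset_iff hQ (hUX hx), filter_mem_eq_inter,
      inter_eq_right.2 hclU]
  refine ⟨?_, fun p hp => ?_⟩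
  · have hsplit := card_filter_add_card_filter_not (s := U)
      (p := fun x => nbrF G x \ Q ⊆ nbr G A \ Q)
    rw [hspanning] at hsplit
    beta_reduce
    omega
  · obtain ⟨hpA, hpQ⟩ := mem_sdiff.1 hp
    obtain ⟨a, ha, hap⟩ := mem_nbr.1 hpA
    refine ⟨a, hclU (subset_cl hA ha), mem_sdiff.2 ⟨mem_nbrF.2 hap, hpQ⟩, ?_⟩
    exact (nbrF_sdiff_subset_iff hQ (hA ha)).2 (subset_cl hA ha)

end Closure

section Families
variable {G : SimpleGraph V} {X : Finset V} {𝒜 : Finset (Finset V)}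

theorem card_le_two_pow_card_sup_cl (hX : ∀ A ∈ 𝒜, A ⊆ X) :
    #𝒜 ≤ 2 ^ #(𝒜.sup (cl G X)) := by
  rw [← card_powerset]
  exact card_le_card fun A hA =>
    mem_powerset.2 ((subset_cl (hX A hA)).trans (le_sup (f := cl G X) hA))

theorem card_filter_nbr_sdiff_eq_le {Q E : Finset V} {c : ℕ} (hX : ∀ A ∈ 𝒜, A ⊆ X)
    (hQ : ∀ A ∈ 𝒜, Q ⊆ nbr G A) (hc : ∀ A ∈ 𝒜, #(cl G X A) = c) :
    #{A ∈ 𝒜 | nbr G A \ Q = E} ≤ 2 ^ c := by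
  obtain h | ⟨A₁, hA₁⟩ := ({A ∈ 𝒜 | nbr G A \ Q = E} : Finset _).eq_empty_or_nonempty
  · simp [h]
  obtain ⟨hA₁𝒜, hA₁E⟩ := mem_filter.1 hA₁
  rw [← hc A₁ hA₁𝒜, ← card_powerset]
  refine card_le_card fun A hA => ?_
  obtain ⟨hA𝒜, hAE⟩ := mem_filter.1 hA
  have hnbr : nbr G A = nbr G A₁ := by
    rw [← sdiff_union_of_subset (hQ A hA𝒜), ← sdiff_union_of_subset (hQ A₁ hA₁𝒜), hAE, hA₁E]
  exact mem_powerset.2 (cl_eq_of_nbr_eq (X := X) hnbr ▸ subset_cl (hX A hA𝒜))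

theorem card_le_two_pow_mul_choose {w c : ℕ} (hX : ∀ A ∈ 𝒜, A ⊆ X)
    (hw : ∀ A ∈ 𝒜, #(nbr G A) = w) (hc : ∀ A ∈ 𝒜, #(cl G X A) = c) :
    #𝒜 ≤ 2 ^ c * (#(𝒜.sup (cl G X)) - c + (w - #(𝒜.inf (nbr G)))).choose
      (w - #(𝒜.inf (nbr G))) := by
  set Q := 𝒜.inf (nbr G)
  set U := 𝒜.sup (cl G X)
  have hQ : ∀ A ∈ 𝒜, Q ⊆ nbr G A := fun A hA => inf_le (f := nbr G) hA
  have hU : ∀ A ∈ 𝒜, cl G X A ⊆ U := fun A hA => le_sup (f := cl G X) hA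
  have hUX : U ⊆ X := Finset.sup_le fun A _ => filter_subset _ X
  refine (card_le_mul_card_image 𝒜 _ fun E _ => card_filter_nbr_sdiff_eq_le hX hQ hc).trans ?_
  refine Nat.mul_le_mul_left _
    (card_le_choose_of_isSpannedBy (𝒰 := U) (φ := fun x => nbrF G x \ Q) fun E hE => ?_)
  obtain ⟨A, hA, rfl⟩ := mem_image.1 hE
  refine ⟨by rw [card_sdiff_of_subset (hQ A hA), hw A hA], ?_⟩
  simpa only [hc A hA] using isSpannedBy_nbr_sdiff (hX A hA) (hQ A hA) (hU A hA) hUX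

end Families

theorem choose_pow_ten_le_two_pow {n r t : ℕ} (hn : n ≤ t) (hr : 10 * r < t) :
    n.choose r ^ 10 ≤ 2 ^ (9 * t) := by
  rcases lt_or_ge n r with hnr | hrn
  · simp [Nat.choose_eq_zero_of_lt hnr]
  have hbinom : n.choose r * 8 ^ (n - r) ≤ 9 ^ n := by
    have hsum : 9 ^ n = ∑ m ∈ range (n + 1), 8 ^ m * n.choose m := by
      simpa using add_pow (8 : ℕ) 1 n
    calc n.choose r * 8 ^ (n - r) = 8 ^ (n - r) * n.choose (n - r) := by
          rw [Nat.choose_symm hrn, mul_comm]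
      _ ≤ ∑ m ∈ range (n + 1), 8 ^ m * n.choose m :=
          single_le_sum (f := fun m => 8 ^ m * n.choose m) (fun _ _ => Nat.zero_le _)
            (mem_range.2 (Nat.lt_succ_of_le (n.sub_le r)) : n - r ∈ range (n + 1))
      _ = 9 ^ n := hsum.symm
  have hpow : n.choose r ^ 10 * 2 ^ (30 * (n - r)) ≤ 2 ^ (9 * t) * 2 ^ (30 * (n - r)) :=
    calc n.choose r ^ 10 * 2 ^ (30 * (n - r)) = (n.choose r * 8 ^ (n - r)) ^ 10 := by
          rw [mul_pow, ← pow_mul, show (8 : ℕ) = 2 ^ 3 by rfl, ← pow_mul]; ring_nf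
      _ ≤ (9 ^ n) ^ 10 := Nat.pow_le_pow_left hbinom 10
      _ ≤ (2 ^ 32) ^ n := by
          rw [← pow_mul, mul_comm, pow_mul]; exact Nat.pow_le_pow_left (by norm_num) n
      _ ≤ 2 ^ (9 * t) * 2 ^ (30 * (n - r)) := by
          rw [← pow_mul, ← pow_add]; exact Nat.pow_le_pow_right (by norm_num) (by omega)
  exact Nat.le_of_mul_le_mul_right hpow (by positivity)

theorem le_two_rpow_div_of_pow_le {a : ℝ} {k m : ℕ} (ha : 0 ≤ a) (hk : k ≠ 0)
    (h : a ^ k ≤ 2 ^ m) : a ≤ (2 : ℝ) ^ ((m : ℝ) / k) := by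
  calc a = (a ^ k) ^ (k⁻¹ : ℝ) := (Real.pow_rpow_inv_natCast ha hk).symm
    _ ≤ ((2 : ℝ) ^ m) ^ (k⁻¹ : ℝ) := Real.rpow_le_rpow (by positivity) h (by positivity)
    _ = (2 : ℝ) ^ ((m : ℝ) / k) := by
        rw [← Real.rpow_natCast, ← Real.rpow_mul zero_le_two, div_eq_mul_inv]

theorem card_pow_ten_le_of_card_sup_cl_le {G : SimpleGraph V} {X : Finset V}
    {𝒜 : Finset (Finset V)} {w c t : ℕ} (hX : ∀ A ∈ 𝒜, A ⊆ X)
    (hw : ∀ A ∈ 𝒜, #(nbr G A) = w) (hc : ∀ A ∈ 𝒜, #(cl G X A) = c) (hct : c + t = w)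
    (hUQ : #(𝒜.sup (cl G X)) ≤ #(𝒜.inf (nbr G))) :
    #𝒜 ^ 10 ≤ 2 ^ (10 * w - t) := by
  obtain rfl | ⟨A₀, hA₀⟩ := 𝒜.eq_empty_or_nonempty
  · simp
  have hcU : c ≤ #(𝒜.sup (cl G X)) := hc A₀ hA₀ ▸ card_le_card (le_sup (f := cl G X) hA₀)
  have hQw : #(𝒜.inf (nbr G)) ≤ w := hw A₀ hA₀ ▸ card_le_card (inf_le (f := nbr G) hA₀)
  by_cases hsmall : t ≤ 10 * (w - #(𝒜.inf (nbr G)))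
  · calc #𝒜 ^ 10 ≤ (2 ^ #(𝒜.inf (nbr G))) ^ 10 :=
          Nat.pow_le_pow_left ((card_le_two_pow_card_sup_cl hX).trans
            (Nat.pow_le_pow_right two_pos hUQ)) 10
      _ ≤ 2 ^ (10 * w - t) := by
          rw [← pow_mul]; exact Nat.pow_le_pow_right two_pos (by omega)
  · calc #𝒜 ^ 10 ≤ (2 ^ c * (#(𝒜.sup (cl G X)) - c + (w - #(𝒜.inf (nbr G)))).choose
            (w - #(𝒜.inf (nbr G)))) ^ 10 :=
          Nat.pow_le_pow_left (card_le_two_pow_mul_choose hX hw hc) 10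
      _ ≤ 2 ^ (10 * c) * 2 ^ (9 * t) := by
          rw [mul_pow, ← pow_mul, mul_comm c]
          exact Nat.mul_le_mul_left _ (choose_pow_ten_le_two_pow (by omega) (by omega))
      _ = 2 ^ (10 * w - t) := by rw [← pow_add]; congr 1; omega

/-- there is an absolute constant `γ'' > 0` such that in any
`d`-regular bipartite graph, for integers `w` and `t ≥ 1` and any
`(S,T) ∈ 2^X × 2^Y` with `|S| ≤ |T|`, the number of `A ∈ 𝒢(w,t)` with
`[A] ⊆ S` and `T ⊆ N(A)` is at most `2^{w-γ''t}`. -/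
theorem stmt_18 :
    ∃ γ'' : ℝ, 0 < γ'' ∧
      ∀ (V : Type) [Fintype V] [DecidableEq V] (G : SimpleGraph V)
        (X Y : Finset V) (d : ℕ),
        IsBipartiteWith G X Y → IsRegularDeg G d →
        ∀ w t : ℤ, 1 ≤ t → ∀ S T : Finset V, S.card ≤ T.card →
          (((GG G X w t).filter
              (fun A => cl G X A ⊆ S ∧ T ⊆ nbr G A)).card : ℝ)
            ≤ (2:ℝ) ^ ((w : ℝ) - γ'' * (t : ℝ)) := by
  refine ⟨1 / 10, by norm_num, fun V _ _ G X Y d _ _ w t ht S T hST => ?_⟩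
  set 𝒜 := (GG G X w t).filter (fun A => cl G X A ⊆ S ∧ T ⊆ nbr G A)
  obtain h𝒜 | ⟨A₀, hA₀⟩ := 𝒜.eq_empty_or_nonempty
  · rw [h𝒜, card_empty, Nat.cast_zero]; positivity
  have hmem : ∀ A ∈ 𝒜, A ⊆ X ∧ (#(nbr G A) : ℤ) = w ∧ (#(cl G X A) : ℤ) = w - t ∧
      cl G X A ⊆ S ∧ T ⊆ nbr G A := fun A hA => by
    simp only [𝒜, GG, mem_filter, mem_powerset] at hA
    exact ⟨hA.1.1, hA.1.2.2.2.1, by omega, hA.2⟩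
  have hUQ : #(𝒜.sup (cl G X)) ≤ #(𝒜.inf (nbr G)) :=
    calc #(𝒜.sup (cl G X)) ≤ #S := card_le_card (Finset.sup_le fun A hA => (hmem A hA).2.2.2.1)
      _ ≤ #T := hST
      _ ≤ #(𝒜.inf (nbr G)) := card_le_card (Finset.le_inf fun A hA => (hmem A hA).2.2.2.2)
  have htw : t ≤ w := by have := (hmem A₀ hA₀).2.2.1; omega
  lift t to ℕ using (by omega)
  lift w to ℕ using (by omega)
  have hpow := card_pow_ten_le_of_card_sup_cl_le (c := w - t) (t := t) (fun A hA => (hmem A hA).1)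
    (fun A hA => by exact_mod_cast (hmem A hA).2.1)
    (fun A hA => by have := (hmem A hA).2.2.1; omega) (by omega) hUQ
  refine (le_two_rpow_div_of_pow_le (k := 10) (Nat.cast_nonneg _) (by norm_num)
    (by exact_mod_cast hpow)).trans_eq ?_
  rw [Nat.cast_sub (by omega)]
  push_cast
  ring_nf
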